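/- For any monotone submodular function f on subsets of [n] and any x ∈ [0,1]^n, the multilinear extension, concave closure, and relaxation f* satisfy F(x) ≤ f⁺(x) ≤ f*(x) ≤ (1 − 1/e)^{-1}·F(x). -/

import Mathlib

open Finset

def Submodular {n : ℕ} (f : Finset (Fin n) → ℝ) : Prop :=
  ∀ S T : Finset (Fin n), f (S ∪ T) + f (S ∩ T) ≤ f S + f T

noncomputable def multilinear {n : ℕ} (f : Finset (Fin n) → ℝ) (x : Fin n → ℝ) : ℝ :=
  ∑ S : Finset (Fin n), (∏ i ∈ S, x i) * (∏ i ∈ Sᶜ, (1 - x i)) * f S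

/-- Concave closure: supremum over distributions with marginals x of the expected value. -/
noncomputable def fplus {n : ℕ} (f : Finset (Fin n) → ℝ) (x : Fin n → ℝ) : ℝ :=
  sSup {y : ℝ | ∃ α : Finset (Fin n) → ℝ,
    (∀ S, 0 ≤ α S) ∧ (∑ S : Finset (Fin n), α S = 1) ∧
    (∀ i, ∑ S ∈ Finset.univ.filter (fun S => i ∈ S), α S = x i) ∧
    y = ∑ S : Finset (Fin n), α S * f S}

noncomputable def fstar {n : ℕ} (f : Finset (Fin n) → ℝ) (x : Fin n → ℝ) : ℝ :=
  (Finset.univ : Finset (Finset (Fin n))).inf' ⟨∅, Finset.mem_univ _⟩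
    (fun S => f S + ∑ i ∈ Sᶜ, (f (insert i S) - f S) * x i)

/-
For every `S`, submodularity and monotonicity give
`f T ≤ f S + ∑ i ∈ T \ S, (f (S ∪ {i}) - f S)`; averaging over `T` drawn from any
distribution with marginals `x` bounds its expectation by the `S`-term of `f*(x)`.
The product distribution is one of these, whence `F ≤ f⁺ ≤ f*`.

For the last inequality let `φ t = F(t x)`. Averaging the `S`-terms of `f*(x)` over `S` drawn
with marginals `t x` gives `f*(x) ≤ φ t + ∑ i, xᵢ (1 - t xᵢ) ∂ᵢF(t x) ≤ φ t + φ' t`,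
the partial derivatives being nonnegative by monotonicity. By Grönwall,
`f*(x) - F(x) ≤ (f*(x) - f ∅) / e`.
-/

section IndepWeight

variable {ι : Type*} [Fintype ι] [DecidableEq ι]

noncomputable def indepWeight (y : ι → ℝ) (S : Finset ι) : ℝ :=
  (∏ i ∈ S, y i) * ∏ i ∈ Sᶜ, (1 - y i)

-- The weight of `S` under the product measure with the coordinate `i` marginalised out.
noncomputable def indepWeightOff (y : ι → ℝ) (i : ι) (S : Finset ι) : ℝ :=
  ∏ j ∈ univ.erase i, if j ∈ S then y j else 1 - y j

lemma indepWeight_eq_prod_ite (y : ι → ℝ) (S : Finset ι) :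
    indepWeight y S = ∏ j, if j ∈ S then y j else 1 - y j := by
  rw [prod_ite, filter_univ_mem, ← compl_filter, filter_univ_mem, indepWeight]

lemma indepWeight_nonneg {y : ι → ℝ} (hy : ∀ i, 0 ≤ y i ∧ y i ≤ 1) (S : Finset ι) :
    0 ≤ indepWeight y S :=
  mul_nonneg (prod_nonneg fun i _ ↦ (hy i).1) (prod_nonneg fun i _ ↦ sub_nonneg.2 (hy i).2)

lemma indepWeightOff_nonneg {y : ι → ℝ} (hy : ∀ i, 0 ≤ y i ∧ y i ≤ 1) (i : ι)
    (S : Finset ι) : 0 ≤ indepWeightOff y i S :=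
  prod_nonneg fun j _ ↦ by split_ifs <;> linarith [hy j]

lemma sum_indepWeight (y : ι → ℝ) : ∑ S, indepWeight y S = 1 := by
  simp [indepWeight, ← Fintype.prod_add]

lemma sum_filter_mem_indepWeight (y : ι → ℝ) (i : ι) :
    ∑ S with i ∈ S, indepWeight y S = y i := by
  -- Replacing the factor `1 - y i` by `0` kills exactly the sets avoiding `i`.
  set b := Function.update (fun j ↦ 1 - y j) i 0
  have h : ∀ S, (if i ∈ S then indepWeight y S else 0) =
      (∏ j ∈ S, y j) * ∏ j ∈ Sᶜ, b j := by
    intro S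
    split_ifs with hi
    · refine congrArg _ (prod_congr rfl fun j hj ↦ ?_)
      simp [b, ne_of_mem_of_not_mem hj (notMem_compl.2 hi)]
    · exact (mul_eq_zero_of_right _
        (prod_eq_zero (mem_compl.2 hi) (Function.update_self ..))).symm
  rw [sum_filter, Fintype.sum_congr _ _ h, ← Fintype.prod_add, Fintype.prod_eq_single i]
  · simp [b]
  · intro j hj
    simp [b, hj]

lemma indepWeight_eq_mul_indepWeightOff {y : ι → ℝ} {i : ι} {S : Finset ι} (hi : i ∉ S) :
    indepWeight y S = (1 - y i) * indepWeightOff y i S := by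
  rw [indepWeight_eq_prod_ite, ← mul_prod_erase _ _ (mem_univ i), if_neg hi, indepWeightOff]

lemma indepWeightOff_insert (y : ι → ℝ) (i : ι) (S : Finset ι) :
    indepWeightOff y i (insert i S) = indepWeightOff y i S :=
  prod_congr rfl fun j hj ↦ by simp [ne_of_mem_erase hj]

lemma sum_eq_sum_powerset_erase {M : Type*} [AddCommMonoid M] (i : ι) (h : Finset ι → M) :
    ∑ S, h S = ∑ A ∈ (univ.erase i).powerset, (h A + h (insert i A)) := by
  have := sum_powerset_insert (notMem_erase i univ) h
  rw [insert_erase (mem_univ i), powerset_univ] at this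
  rw [this, sum_add_distrib]

end IndepWeight

section Multilinear

variable {n : ℕ}

-- `∂F/∂yᵢ (y) = E[f(R ∪ {i}) - f(R \ {i})]` for `R` drawn with independent marginals `y`.
noncomputable def multilinearPartial (f : Finset (Fin n) → ℝ) (y : Fin n → ℝ) (i : Fin n) :
    ℝ :=
  ∑ A ∈ (univ.erase i).powerset, indepWeightOff y i A * (f (insert i A) - f A)

lemma multilinear_eq_sum_indepWeight (f : Finset (Fin n) → ℝ) (y : Fin n → ℝ) :
    multilinear f y = ∑ S, indepWeight y S * f S :=
  rfl

lemma multilinear_nonneg {f : Finset (Fin n) → ℝ} (hf : ∀ S, 0 ≤ f S) {y : Fin n → ℝ}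
    (hy : ∀ i, 0 ≤ y i ∧ y i ≤ 1) : 0 ≤ multilinear f y :=
  sum_nonneg fun S _ ↦ mul_nonneg (indepWeight_nonneg hy S) (hf S)

lemma multilinearPartial_nonneg {f : Finset (Fin n) → ℝ}
    (hmono : ∀ S T : Finset (Fin n), S ⊆ T → f S ≤ f T) {y : Fin n → ℝ}
    (hy : ∀ i, 0 ≤ y i ∧ y i ≤ 1) (i : Fin n) : 0 ≤ multilinearPartial f y i :=
  sum_nonneg fun A _ ↦ mul_nonneg (indepWeightOff_nonneg hy i A)
    (sub_nonneg.2 (hmono _ _ (subset_insert i A)))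

lemma sum_sum_indepWeightOff_mul (f : Finset (Fin n) → ℝ) (x y : Fin n → ℝ) :
    ∑ S, (∑ i, indepWeightOff y i S * (if i ∈ S then x i else -x i)) * f S
      = ∑ i, x i * multilinearPartial f y i := by
  simp_rw [sum_mul]
  rw [sum_comm]
  refine sum_congr rfl fun i _ ↦ ?_
  rw [sum_eq_sum_powerset_erase i, multilinearPartial, mul_sum]
  refine sum_congr rfl fun A hA ↦ ?_
  have hiA : i ∉ A := fun h ↦ notMem_erase i univ (mem_powerset.1 hA h)
  rw [if_neg hiA, if_pos (mem_insert_self i A), indepWeightOff_insert]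
  ring

lemma hasDerivAt_multilinear_smul (f : Finset (Fin n) → ℝ) (x : Fin n → ℝ) (t : ℝ) :
    HasDerivAt (fun s ↦ multilinear f (s • x))
      (∑ i, x i * multilinearPartial f (t • x) i) t := by
  have hw : ∀ S, HasDerivAt (fun s ↦ indepWeight (s • x) S)
      (∑ i, indepWeightOff (t • x) i S * (if i ∈ S then x i else -x i)) t := by
    intro S
    simp_rw [indepWeight_eq_prod_ite, Pi.smul_apply, smul_eq_mul]
    refine (HasDerivAt.fun_finsetProd (f := fun j s ↦ if j ∈ S then s * x j else 1 - s * x j)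
      (f' := fun j ↦ if j ∈ S then x j else -x j) fun j _ ↦ ?_).congr_deriv ?_
    · split_ifs
      · simpa using (hasDerivAt_id t).mul_const (x j)
      · simpa using ((hasDerivAt_id t).mul_const (x j)).const_sub 1
    · simp [indepWeightOff, smul_eq_mul]
  rw [← sum_sum_indepWeightOff_mul]
  exact HasDerivAt.fun_sum fun S _ ↦ (hw S).mul_const (f S)

lemma sum_indepWeight_mul_sum_compl (f : Finset (Fin n) → ℝ) (x y : Fin n → ℝ) :
    ∑ S, indepWeight y S * ∑ i ∈ Sᶜ, (f (insert i S) - f S) * x i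
      = ∑ i, x i * ((1 - y i) * multilinearPartial f y i) := by
  simp_rw [mul_sum]
  rw [sum_comm' (t' := univ) (s' := fun i ↦ (univ.erase i).powerset) (by simp [subset_erase])]
  refine sum_congr rfl fun i _ ↦ ?_
  rw [multilinearPartial, mul_sum, mul_sum]
  refine sum_congr rfl fun S hS ↦ ?_
  have hiS : i ∉ S := fun h ↦ notMem_erase i univ (mem_powerset.1 hS h)
  rw [indepWeight_eq_mul_indepWeightOff hiS]
  ring

lemma fstar_le_multilinear_add_sum_mul_multilinearPartial {f : Finset (Fin n) → ℝ}
    (hmono : ∀ S T : Finset (Fin n), S ⊆ T → f S ≤ f T) {x y : Fin n → ℝ}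
    (hx : ∀ i, 0 ≤ x i) (hy : ∀ i, 0 ≤ y i ∧ y i ≤ 1) :
    fstar f x ≤ multilinear f y + ∑ i, x i * multilinearPartial f y i := by
  calc fstar f x = ∑ S, indepWeight y S * fstar f x := by
        rw [← sum_mul, sum_indepWeight, one_mul]
    _ ≤ ∑ S, indepWeight y S * (f S + ∑ i ∈ Sᶜ, (f (insert i S) - f S) * x i) :=
        sum_le_sum fun S _ ↦
          mul_le_mul_of_nonneg_left (inf'_le _ (mem_univ S)) (indepWeight_nonneg hy S)
    _ = multilinear f y + ∑ i, x i * ((1 - y i) * multilinearPartial f y i) := by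
        simp only [mul_add, sum_add_distrib, sum_indepWeight_mul_sum_compl,
          multilinear_eq_sum_indepWeight]
    _ ≤ multilinear f y + ∑ i, x i * multilinearPartial f y i := by
        gcongr with i
        · exact hx i
        · exact mul_le_of_le_one_left (multilinearPartial_nonneg hmono hy i)
            (by linarith [hy i])

end Multilinear

lemma sub_le_mul_exp_of_sub_le_deriv {φ φ' : ℝ → ℝ} {c a b : ℝ} (hab : a ≤ b)
    (hφ : ∀ t ∈ Set.Icc a b, HasDerivAt φ (φ' t) t)
    (h : ∀ t ∈ Set.Ico a b, c - φ t ≤ φ' t) :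
    c - φ b ≤ (c - φ a) * Real.exp (-(b - a)) := by
  have hcont : ContinuousOn (fun t ↦ c - φ t) (Set.Icc a b) :=
    fun t ht ↦ (hφ t ht).continuousAt.continuousWithinAt.const_sub c
  have hderiv :
      ∀ t ∈ Set.Ico a b, HasDerivWithinAt (fun t ↦ c - φ t) (-φ' t) (Set.Ici t) t :=
    fun t ht ↦ ((hφ t (Set.Ico_subset_Icc_self ht)).const_sub c).hasDerivWithinAt
  have := le_gronwallBound_of_liminf_deriv_right_le (K := -1) (ε := 0) hcont
    (fun t ht _ hr ↦ (hderiv t ht).liminf_right_slope_le hr) le_rfl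
    (fun t ht ↦ by linarith [h t ht]) b ⟨hab, le_rfl⟩
  simpa [gronwallBound_ε0] using this

section Submodular

variable {n : ℕ} {f : Finset (Fin n) → ℝ}

lemma Submodular.apply_union_le (hf : Submodular f) (S : Finset (Fin n)) {A : Finset (Fin n)}
    (hA : Disjoint A S) : f (S ∪ A) ≤ f S + ∑ i ∈ A, (f (insert i S) - f S) := by
  induction A using Finset.induction_on with
  | empty => simp
  | @insert a A ha ih =>
    have haS : a ∉ S := disjoint_left.1 hA (mem_insert_self a A)
    have hunion : (S ∪ A) ∪ insert a S = S ∪ insert a A := by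
      ext j; simp only [mem_union, mem_insert]; tauto
    have hinter : (S ∪ A) ∩ insert a S = S := by
      ext j; simp only [mem_inter, mem_union, mem_insert]
      constructor
      · rintro ⟨hj | hj, rfl | hj'⟩ <;> first | exact absurd hj ha | assumption
      · exact fun hj ↦ ⟨Or.inl hj, Or.inr hj⟩
    have := hf (S ∪ A) (insert a S)
    rw [hunion, hinter] at this
    rw [sum_insert ha]
    linarith [ih (disjoint_of_subset_left (subset_insert a A) hA)]

lemma Submodular.apply_le_add_sum_sdiff (hf : Submodular f)
    (hmono : ∀ S T : Finset (Fin n), S ⊆ T → f S ≤ f T) (S T : Finset (Fin n)) :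
    f T ≤ f S + ∑ i ∈ T \ S, (f (insert i S) - f S) :=
  calc f T ≤ f (S ∪ (T \ S)) := hmono _ _ (by simp)
    _ ≤ _ := hf.apply_union_le S sdiff_disjoint

lemma Submodular.sum_mul_le_fstar (hf : Submodular f)
    (hmono : ∀ S T : Finset (Fin n), S ⊆ T → f S ≤ f T) {x : Fin n → ℝ}
    {α : Finset (Fin n) → ℝ} (hα0 : ∀ S, 0 ≤ α S) (hα1 : ∑ S, α S = 1)
    (hαx : ∀ i, ∑ S with i ∈ S, α S = x i) : ∑ S, α S * f S ≤ fstar f x := by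
  refine le_inf' _ _ fun S _ ↦ ?_
  have hswap : ∑ T, α T * ∑ i ∈ T \ S, (f (insert i S) - f S)
      = ∑ i ∈ Sᶜ, (f (insert i S) - f S) * x i := by
    simp_rw [mul_sum]
    rw [sum_comm' (t' := Sᶜ) (s' := fun i ↦ univ.filter (i ∈ ·)) (by simp [and_comm])]
    refine sum_congr rfl fun i _ ↦ ?_
    rw [← hαx i, mul_sum]
    exact sum_congr rfl fun T _ ↦ mul_comm _ _
  calc ∑ T, α T * f T ≤ ∑ T, α T * (f S + ∑ i ∈ T \ S, (f (insert i S) - f S)) :=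
        sum_le_sum fun T _ ↦
          mul_le_mul_of_nonneg_left (hf.apply_le_add_sum_sdiff hmono S T) (hα0 T)
    _ = f S + ∑ i ∈ Sᶜ, (f (insert i S) - f S) * x i := by
        rw [← hswap]; simp only [mul_add, sum_add_distrib, ← sum_mul, hα1, one_mul]

lemma Submodular.sum_mul_le_fplus (hf : Submodular f)
    (hmono : ∀ S T : Finset (Fin n), S ⊆ T → f S ≤ f T) {x : Fin n → ℝ}
    {α : Finset (Fin n) → ℝ} (hα0 : ∀ S, 0 ≤ α S) (hα1 : ∑ S, α S = 1)
    (hαx : ∀ i, ∑ S with i ∈ S, α S = x i) : ∑ S, α S * f S ≤ fplus f x := by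
  refine le_csSup ⟨fstar f x, ?_⟩ ⟨α, hα0, hα1, hαx, rfl⟩
  rintro _ ⟨β, hβ0, hβ1, hβx, rfl⟩
  exact hf.sum_mul_le_fstar hmono hβ0 hβ1 hβx

lemma Submodular.multilinear_le_fplus (hf : Submodular f)
    (hmono : ∀ S T : Finset (Fin n), S ⊆ T → f S ≤ f T) {x : Fin n → ℝ}
    (hx : ∀ i, 0 ≤ x i ∧ x i ≤ 1) : multilinear f x ≤ fplus f x :=
  hf.sum_mul_le_fplus hmono (indepWeight_nonneg hx) (sum_indepWeight x)
    (sum_filter_mem_indepWeight x)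

lemma Submodular.fplus_le_fstar (hf : Submodular f)
    (hmono : ∀ S T : Finset (Fin n), S ⊆ T → f S ≤ f T) {x : Fin n → ℝ}
    (hx : ∀ i, 0 ≤ x i ∧ x i ≤ 1) : fplus f x ≤ fstar f x := by
  refine csSup_le ⟨_, indepWeight x, indepWeight_nonneg hx, sum_indepWeight x,
    sum_filter_mem_indepWeight x, rfl⟩ ?_
  rintro _ ⟨α, hα0, hα1, hαx, rfl⟩
  exact hf.sum_mul_le_fstar hmono hα0 hα1 hαx

end Submodular

lemma fstar_le_inv_one_sub_exp_mul_multilinear {n : ℕ} {f : Finset (Fin n) → ℝ}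
    (hnonneg : ∀ S, 0 ≤ f S) (hmono : ∀ S T : Finset (Fin n), S ⊆ T → f S ≤ f T)
    {x : Fin n → ℝ} (hx : ∀ i, 0 ≤ x i ∧ x i ≤ 1) :
    fstar f x ≤ (1 - 1 / Real.exp 1)⁻¹ * multilinear f x := by
  set φ : ℝ → ℝ := fun s ↦ multilinear f (s • x)
  have hscaled : ∀ t ∈ Set.Icc (0 : ℝ) 1, ∀ i, 0 ≤ (t • x) i ∧ (t • x) i ≤ 1 :=
    fun t ht i ↦ ⟨mul_nonneg ht.1 (hx i).1, mul_le_one₀ ht.2 (hx i).1 (hx i).2⟩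
  have hode := sub_le_mul_exp_of_sub_le_deriv (φ := φ) (c := fstar f x) zero_le_one
    (fun t _ ↦ hasDerivAt_multilinear_smul f x t) fun t ht ↦ by
      linarith [fstar_le_multilinear_add_sum_mul_multilinearPartial hmono (fun i ↦ (hx i).1)
        (hscaled t (Set.Ico_subset_Icc_self ht))]
  have hφ0 : 0 ≤ φ 0 := multilinear_nonneg hnonneg (hscaled 0 ⟨le_rfl, zero_le_one⟩)
  have hφ1 : φ 1 = multilinear f x := by simp [φ]
  have he : 0 < 1 - 1 / Real.exp 1 :=
    sub_pos.2 ((div_lt_one (Real.exp_pos 1)).2 (Real.one_lt_exp_iff.2 one_pos))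
  rw [sub_zero, Real.exp_neg, ← one_div] at hode
  have hdecay : (fstar f x - φ 0) * (1 / Real.exp 1) ≤ fstar f x * (1 / Real.exp 1) :=
    mul_le_mul_of_nonneg_right (by linarith) (by positivity)
  rw [inv_mul_eq_div, le_div_iff₀ he, ← hφ1]
  linarith

theorem stmt_14 {n : ℕ} (f : Finset (Fin n) → ℝ) (hf : Submodular f)
    (hnonneg : ∀ S, 0 ≤ f S) (hmono : ∀ S T : Finset (Fin n), S ⊆ T → f S ≤ f T)
    (x : Fin n → ℝ) (hx : ∀ i, 0 ≤ x i ∧ x i ≤ 1) :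
    multilinear f x ≤ fplus f x ∧ fplus f x ≤ fstar f x ∧
      fstar f x ≤ (1 - 1 / Real.exp 1)⁻¹ * multilinear f x :=
  ⟨hf.multilinear_le_fplus hmono hx, hf.fplus_le_fstar hmono hx,
    fstar_le_inv_one_sub_exp_mul_multilinear hnonneg hmono hx⟩
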